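/- If Z is a constant grid (z_i = c for all i), then the generalized Gončarov basis (t_n) for (𝔡, Z) satisfies the Appell-type binomial identity t_n(x+ξ) = Σ_{i=0}^n C(n,i) t_{n−i}(ξ) p_i(x) for all ξ ∈ K and n, where (p_n) is the basic sequence of 𝔡. -/

import Mathlib

open Polynomial

/-- The shift operator `E_a : K[x] → K[x]`, `f(x) ↦ f(x+a)`, as a linear endomorphism. -/
noncomputable def shiftOp (K : Type*) [Field K] (a : K) : Module.End K (Polynomial K) :=
  (aeval (X + C a) : Polynomial K →ₐ[K] Polynomial K).toLinearMap

/-- A linear operator on `K[x]` is shift-invariant if it commutes with every shift `E_a`. -/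
def IsShiftInvariant {K : Type*} [Field K] (s : Module.End K (Polynomial K)) : Prop :=
  ∀ a : K, s ∘ₗ shiftOp K a = shiftOp K a ∘ₗ s

/-- A delta operator: shift-invariant and sends `X` to a nonzero constant. -/
def IsDeltaOperator {K : Type*} [Field K] (d : Module.End K (Polynomial K)) : Prop :=
  IsShiftInvariant d ∧ ∃ c : K, c ≠ 0 ∧ d X = C c

/-- The sequence of basic polynomials of a delta operator `d`. -/
def IsBasicSequence {K : Type*} [Field K] (d : Module.End K (Polynomial K))
    (p : ℕ → Polynomial K) : Prop :=
  p 0 = 1 ∧ (∀ n, 1 ≤ n → (p n).eval 0 = 0) ∧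
    ∀ n, 1 ≤ n → d (p n) = (n : K) • p (n - 1)

/-- The generalized Gončarov basis associated with the pair `(d, z)`:
`deg t_n = n` and `ε_{z_i}(d^i t_n) = n! δ_{i,n}`. -/
def IsGoncarovBasis {K : Type*} [Field K] (d : Module.End K (Polynomial K))
    (z : ℕ → K) (t : ℕ → Polynomial K) : Prop :=
  ∀ n, (t n).natDegree = n ∧
    ∀ i, ((d ^ i) (t n)).eval (z i) = if i = n then (n.factorial : K) else 0

/-!
Both `t` and `p` satisfy `d s_n = n s_{n-1}`, hence `d^k s_n = n(n-1)⋯(n-k+1) s_{n-k}`. For `t`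
this follows from the Gončarov conditions, which determine a polynomial: `h ↦ (d^i h)(c) / i!`
is the `i`-th coordinate functional of the basis `t`. Since `d` commutes with shifts and the grid
is constant, a polynomial `h` with `(d^i h)(a) = 0` for all `i` vanishes for every point `a`, not
only for `a = c`. Taking `a = 0`, where `(d^k p_i)(0) = k! δ_{ik}`, both sides of the identity
have `k`-th `d`-derivative `n(n-1)⋯(n-k+1) t_{n-k}(ξ)`.
-/

theorem shiftOp_apply {K : Type*} [Field K] (a : K) (f : K[X]) :
    shiftOp K a f = f.comp (X + C a) :=
  rfl

namespace IsShiftInvariant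

variable {K : Type*} [Field K] {d : Module.End K K[X]}

theorem pow_apply_comp (hd : IsShiftInvariant d) (i : ℕ) (a : K) (f : K[X]) :
    (d ^ i) (f.comp (X + C a)) = ((d ^ i) f).comp (X + C a) :=
  LinearMap.congr_fun ((Commute.pow_left (hd a) i).eq) f

theorem map_C (hd : IsShiftInvariant d) {a : K} (hX : d X = C a) (r : K) : d (C r) = 0 := by
  have h := LinearMap.congr_fun (hd r) X
  simp only [LinearMap.comp_apply, shiftOp_apply, X_comp, hX, C_comp, map_add] at h
  simpa using h

end IsShiftInvariant

theorem dpow_apply_eq_descFactorial_smul {K : Type*} [Field K] {d : Module.End K K[X]}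
    {s : ℕ → K[X]} (hs : ∀ n, d (s n) = (n : K) • s (n - 1)) (n k : ℕ) :
    (d ^ k) (s n) = (n.descFactorial k : K) • s (n - k) := by
  induction k with
  | zero => simp
  | succ k ih =>
    rw [pow_succ', Module.End.mul_apply, ih, map_smul, hs, smul_smul, Nat.descFactorial_succ,
      Nat.sub_sub]
    push_cast
    ring_nf

namespace IsGoncarovBasis

variable {K : Type*} [Field K] [CharZero K] {d : Module.End K K[X]} {z : ℕ → K}
  {t : ℕ → K[X]}

theorem ne_zero (ht : IsGoncarovBasis d z t) (n : ℕ) : t n ≠ 0 := by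
  intro h
  have := (ht n).2 n
  simp only [h, map_zero, eval_zero] at this
  exact (Nat.cast_ne_zero.mpr n.factorial_ne_zero) this.symm

noncomputable def basis (ht : IsGoncarovBasis d z t) : Module.Basis ℕ K K[X] :=
  Polynomial.Sequence.basis
    ⟨t, fun n => by rw [degree_eq_natDegree (ht.ne_zero n), (ht n).1]⟩
    fun n => (leadingCoeff_ne_zero.mpr (ht.ne_zero n)).isUnit

theorem basis_apply (ht : IsGoncarovBasis d z t) (n : ℕ) : ht.basis n = t n :=
  Polynomial.Sequence.basis_eq_self _ _ n

theorem leval_comp_dpow (ht : IsGoncarovBasis d z t) (i : ℕ) :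
    leval (z i) ∘ₗ d ^ i = (i.factorial : K) • ht.basis.coord i := by
  refine ht.basis.ext fun n => ?_
  rw [LinearMap.comp_apply, leval_apply, LinearMap.smul_apply, Module.Basis.coord_apply,
    Module.Basis.repr_self, ht.basis_apply, (ht n).2 i, Finsupp.single_apply]
  split_ifs <;> simp_all

theorem eq_zero_of_eval_dpow (ht : IsGoncarovBasis d z t) {h : K[X]}
    (hh : ∀ i, ((d ^ i) h).eval (z i) = 0) : h = 0 := by
  refine ht.basis.forall_coord_eq_zero_iff.mp fun i => ?_
  have := LinearMap.congr_fun (ht.leval_comp_dpow i) h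
  rw [LinearMap.comp_apply, leval_apply, hh i, LinearMap.smul_apply, smul_eq_mul] at this
  exact (mul_eq_zero.mp this.symm).resolve_left (Nat.cast_ne_zero.mpr i.factorial_ne_zero)

variable {c : K}

theorem map_eq_natCast_smul_pred (ht : IsGoncarovBasis d (fun _ => c) t) (n : ℕ) :
    d (t n) = (n : K) • t (n - 1) := by
  rw [← sub_eq_zero]
  refine ht.eq_zero_of_eval_dpow fun i => ?_
  have hdpow := (ht n).2 (i + 1)
  rw [pow_succ, Module.End.mul_apply] at hdpow
  rw [map_sub, map_smul, eval_sub, eval_smul, hdpow, (ht (n - 1)).2 i]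
  rcases n with _ | n
  · simp
  · simp [Nat.factorial_succ]

theorem eq_zero_of_eval_dpow_at (hd : IsShiftInvariant d)
    (ht : IsGoncarovBasis d (fun _ => c) t) (a : K) {h : K[X]}
    (hh : ∀ i, ((d ^ i) h).eval a = 0) : h = 0 := by
  have hshift : h.comp (X + C (a - c)) = 0 := ht.eq_zero_of_eval_dpow fun i => by
    rw [hd.pow_apply_comp, eval_comp]
    simpa using hh i
  have := congrArg (·.comp (X - C (a - c))) hshift
  simpa [comp_assoc] using this

end IsGoncarovBasis

namespace IsBasicSequence

variable {K : Type*} [Field K] {d : Module.End K K[X]} {p : ℕ → K[X]}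

theorem map_eq_natCast_smul_pred (hd : IsDeltaOperator d) (hp : IsBasicSequence d p) (n : ℕ) :
    d (p n) = (n : K) • p (n - 1) := by
  rcases Nat.eq_zero_or_pos n with rfl | hn
  · obtain ⟨a, -, hX⟩ := hd.2
    simpa [hp.1] using hd.1.map_C hX 1
  · exact hp.2.2 n hn

theorem eval_zero_dpow (hd : IsDeltaOperator d) (hp : IsBasicSequence d p) (n k : ℕ) :
    ((d ^ k) (p n)).eval 0 = if n = k then (k.factorial : K) else 0 := by
  rw [dpow_apply_eq_descFactorial_smul (hp.map_eq_natCast_smul_pred hd), eval_smul]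
  rcases lt_trichotomy n k with hlt | rfl | hgt
  · simp [Nat.descFactorial_eq_zero_iff_lt.mpr hlt, hlt.ne]
  · simp [hp.1, Nat.descFactorial_self]
  · simp [hp.2.1 (n - k) (by omega), hgt.ne']

theorem eval_zero_dpow_sum_smul (hd : IsDeltaOperator d) (hp : IsBasicSequence d p)
    (s : Finset ℕ) (f : ℕ → K) (k : ℕ) :
    ((d ^ k) (∑ i ∈ s, f i • p i)).eval 0 = if k ∈ s then f k * k.factorial else 0 := by
  simp only [map_sum, map_smul, eval_finsetSum, eval_smul, hp.eval_zero_dpow hd, smul_eq_mul,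
    mul_ite, mul_zero, Finset.sum_ite_eq']

end IsBasicSequence

theorem stmt14 {K : Type*} [Field K] [CharZero K] (d : Module.End K (Polynomial K))
    (hd : IsDeltaOperator d) (c : K) (t p : ℕ → Polynomial K)
    (ht : IsGoncarovBasis d (fun _ => c) t) (hp : IsBasicSequence d p) :
    ∀ (ξ : K) (n : ℕ), (t n).comp (X + C ξ) =
      ∑ i ∈ Finset.range (n + 1),
        (n.choose i : K) • ((t (n - i)).eval ξ) • p i := by
  intro ξ n
  simp only [smul_smul]
  rw [← sub_eq_zero]
  refine ht.eq_zero_of_eval_dpow_at hd.1 0 fun k => ?_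
  have hlhs : ((d ^ k) ((t n).comp (X + C ξ))).eval 0 =
      (n.descFactorial k : K) * (t (n - k)).eval ξ := by
    rw [hd.1.pow_apply_comp, eval_comp,
      dpow_apply_eq_descFactorial_smul ht.map_eq_natCast_smul_pred]
    simp
  rw [map_sub, eval_sub, hlhs, hp.eval_zero_dpow_sum_smul hd, sub_eq_zero]
  split_ifs with hk
  · rw [Nat.descFactorial_eq_factorial_mul_choose]
    push_cast
    ring
  · rw [Nat.descFactorial_eq_zero_iff_lt.mpr (by simpa using hk), Nat.cast_zero, zero_mul]
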